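/- arXiv:2401.13808 — 2 statements merged into one kernel-verified Lean document; each statement's English description precedes it below -/
import Mathlib

section
/- With α(x) = Arg T(x + i√(1-x²)), T(z) = (z+1/3)/(1+z/3): for small s > 0, if x₁, x₂ ∈ [-1,1] and |x₁ - x₂| ≤ s, then |α(x₁) - α(x₂)| ≤ α(-1) - α(-1+s) < 4√s. -/
/-!
On the unit circle `T(z) = (3z + 1)/(z + 3)` has real part `(5x + 3)/(3x + 5)` at
`z = x + i√(1-x²)` and stays in the closed upper half-plane, so `α(x) = arccos ((5x + 3)/(3x + 5))`.
With `t = y - x`, the bound `|α(x) - α(y)| ≤ α(-1) - α(-1+t) = arccos ((2 - 5t)/(2 + 3t))` becomes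
`cos (α(x) - α(y)) ≥ (2 - 5t)/(2 + 3t)`; expanding the cosine of the difference and squaring away
the one square root leaves a polynomial inequality in `x + 1`, `1 - y`, `t`, valid for all
`-1 ≤ x ≤ y ≤ 1`. The estimate `arccos ((2 - 5s)/(2 + 3s)) < 4√s` follows from the quartic Taylor
bound `cos z ≤ 1 - z²/2 + 5z⁴/96` at `z = 4√s`.
-/

noncomputable def alphaFn (x : ℝ) : ℝ :=
  Complex.arg
    ((((x : ℂ) + Real.sqrt (1 - x ^ 2) * Complex.I) + 1 / 3) /
      (1 + ((x : ℂ) + Real.sqrt (1 - x ^ 2) * Complex.I) / 3))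

open Real Set

noncomputable def mobiusRe (x : ℝ) : ℝ := (5 * x + 3) / (3 * x + 5)

noncomputable def mobiusIm (x : ℝ) : ℝ := 4 * √(1 - x ^ 2) / (3 * x + 5)

section Mobius

variable {x : ℝ}

lemma mobiusRe_mem_Icc (hx : x ∈ Icc (-1 : ℝ) 1) : mobiusRe x ∈ Icc (-1 : ℝ) 1 := by
  obtain ⟨h₁, h₂⟩ := hx
  have hd : 0 < 3 * x + 5 := by linarith
  constructor
  · rw [mobiusRe, le_div_iff₀ hd]; linarith
  · rw [mobiusRe, div_le_one hd]; linarith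

lemma sqrt_one_sub_mobiusRe_sq (hx : x ∈ Icc (-1 : ℝ) 1) :
    √(1 - mobiusRe x ^ 2) = mobiusIm x := by
  have hd : 0 < 3 * x + 5 := by linarith [hx.1]
  have hr : √(1 - x ^ 2) ^ 2 = 1 - x ^ 2 := sq_sqrt (by nlinarith [hx.1, hx.2])
  rw [mobiusIm, ← sqrt_sq (by positivity : 0 ≤ 4 * √(1 - x ^ 2) / (3 * x + 5))]
  congr 1
  rw [mobiusRe, div_pow, div_pow, mul_pow, hr, eq_div_iff (by positivity), sub_mul,
    div_mul_cancel₀ _ (by positivity)]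
  ring

lemma mobius_circle_eq (hx : x ∈ Icc (-1 : ℝ) 1) :
    ((x : ℂ) + √(1 - x ^ 2) * Complex.I + 1 / 3) / (1 + ((x : ℂ) + √(1 - x ^ 2) * Complex.I) / 3)
      = mobiusRe x + mobiusIm x * Complex.I := by
  have hd : (3 * x + 5 : ℂ) ≠ 0 := by
    exact_mod_cast (show (3 * x + 5 : ℝ) ≠ 0 by linarith [hx.1])
  have hr : (√(1 - x ^ 2) : ℂ) ^ 2 = 1 - (x : ℂ) ^ 2 := by
    exact_mod_cast sq_sqrt (by nlinarith [hx.1, hx.2] : (0 : ℝ) ≤ 1 - x ^ 2)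
  have hden : 1 + ((x : ℂ) + √(1 - x ^ 2) * Complex.I) / 3 ≠ 0 := by
    intro h
    have := congrArg Complex.re h
    simp at this
    linarith [hx.1]
  rw [div_eq_iff hden, mobiusRe, mobiusIm]
  push_cast
  rw [← mul_div_right_comm, ← add_div, div_mul_eq_mul_div, eq_div_iff hd]
  linear_combination (4 / 3) * hr - (4 / 3) * (√(1 - x ^ 2) : ℂ) ^ 2 * Complex.I_sq

end Mobius

lemma arg_add_sqrt_one_sub_sq_mul_I {c : ℝ} (hc : c ∈ Icc (-1 : ℝ) 1) :
    Complex.arg (c + √(1 - c ^ 2) * Complex.I) = arccos c := by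
  have h := Complex.arg_cos_add_sin_mul_I (θ := arccos c)
    ⟨by linarith [arccos_nonneg c, pi_pos], arccos_le_pi c⟩
  rwa [← Complex.ofReal_cos, ← Complex.ofReal_sin, cos_arccos hc.1 hc.2, sin_arccos] at h

section Alpha

variable {x y : ℝ}

lemma alphaFn_eq_arccos (hx : x ∈ Icc (-1 : ℝ) 1) : alphaFn x = arccos (mobiusRe x) := by
  rw [alphaFn, mobius_circle_eq hx, ← sqrt_one_sub_mobiusRe_sq hx,
    arg_add_sqrt_one_sub_sq_mul_I (mobiusRe_mem_Icc hx)]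

lemma cos_alphaFn_sub (hx : x ∈ Icc (-1 : ℝ) 1) (hy : y ∈ Icc (-1 : ℝ) 1) :
    cos (alphaFn x - alphaFn y) = mobiusRe x * mobiusRe y + mobiusIm x * mobiusIm y := by
  have hx' := mobiusRe_mem_Icc hx
  have hy' := mobiusRe_mem_Icc hy
  rw [alphaFn_eq_arccos hx, alphaFn_eq_arccos hy, cos_sub, cos_arccos hx'.1 hx'.2,
    cos_arccos hy'.1 hy'.2, sin_arccos, sin_arccos, sqrt_one_sub_mobiusRe_sq hx,
    sqrt_one_sub_mobiusRe_sq hy]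

end Alpha

lemma increment_polynomial_le {a b t : ℝ} (ha : 0 ≤ a) (hb : 0 ≤ b) (ht : 0 ≤ t)
    (h : 15 * t * (a + t) ≤ 2 * b * (a + b + t)) :
    a * (2 * b * (a + b + t) - 15 * t * (a + t)) ^ 2
      ≤ 4 * (a + b + 4 * t) ^ 2 * b * (a + t) * (b + t) := by
  have hrem : 0 ≤ t * b * (64 * t ^ 3 + 96 * b * t ^ 2 + 36 * b ^ 2 * t + 4 * b ^ 3
      + 126 * a * t ^ 2 + 162 * a * b * t + 36 * a * b ^ 2 + 96 * a ^ 2 * t + 66 * a ^ 2 * b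
      + 34 * a ^ 3) := by positivity
  have hmain : 0 ≤ t * (15 * a * (a + t)) * (2 * b * (a + b + t) - 15 * t * (a + t)) := by
    have := sub_nonneg.2 h
    positivity
  linear_combination hrem + hmain

lemma ratio_le_cos_alphaFn_sub {x y : ℝ} (hx : -1 ≤ x) (hxy : x ≤ y) (hy : y ≤ 1) :
    (2 - 5 * (y - x)) / (2 + 3 * (y - x)) ≤ cos (alphaFn x - alphaFn y) := by
  have ha : 0 ≤ x + 1 := by linarith
  have hb : 0 ≤ 1 - y := by linarith
  have ht : 0 ≤ y - x := by linarith
  have hS2 : (√(1 - x ^ 2) * √(1 - y ^ 2)) ^ 2 = (1 - x ^ 2) * (1 - y ^ 2) := by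
    rw [mul_pow, sq_sqrt (by nlinarith), sq_sqrt (by nlinarith)]
  rw [cos_alphaFn_sub ⟨hx, hxy.trans hy⟩ ⟨hx.trans hxy, hy⟩, mobiusRe, mobiusRe, mobiusIm,
    mobiusIm, div_mul_div_comm, div_mul_div_comm, ← add_div,
    div_le_div_iff₀ (by linarith) (by nlinarith)]
  -- the square-root-free terms combine to `8 (x + 1) (4 (1 - y) - 15 (y - x) (y + 1))`
  suffices h : 8 * (x + 1) * (4 * (1 - y) - 15 * (y - x) * (y + 1))
      ≤ 16 * (2 + 3 * (y - x)) * (√(1 - x ^ 2) * √(1 - y ^ 2)) by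
    linear_combination h
  rcases le_or_gt (4 * (1 - y) - 15 * (y - x) * (y + 1)) 0 with hP | hP
  · exact (mul_nonpos_of_nonneg_of_nonpos (by positivity) hP).trans (by positivity)
  · have key := increment_polynomial_le ha hb ht (by linarith)
    refine (pow_le_pow_iff_left₀ (by positivity) (by positivity) two_ne_zero).1 ?_
    rw [mul_pow _ (_ * _), hS2]
    linear_combination 64 * (x + 1) * key

lemma antitoneOn_two_sub_five_mul_div :
    AntitoneOn (fun s : ℝ => (2 - 5 * s) / (2 + 3 * s)) (Ici 0) := by
  intro t ht s hs hts
  simp only [mem_Ici] at ht hs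
  rw [div_le_div_iff₀ (by linarith) (by linarith)]
  nlinarith

lemma abs_alphaFn_sub_le {s x y : ℝ} (hx : x ∈ Icc (-1 : ℝ) 1) (hy : y ∈ Icc (-1 : ℝ) 1)
    (hxy : |x - y| ≤ s) : |alphaFn x - alphaFn y| ≤ arccos ((2 - 5 * s) / (2 + 3 * s)) := by
  wlog h : x ≤ y generalizing x y
  · rw [abs_sub_comm]
    exact this hy hx (by rwa [abs_sub_comm]) (le_of_not_ge h)
  rw [abs_sub_comm, abs_of_nonneg (sub_nonneg.2 h)] at hxy
  have ht : 0 ≤ y - x := sub_nonneg.2 h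
  have hcos : (2 - 5 * s) / (2 + 3 * s) ≤ cos (alphaFn x - alphaFn y) :=
    (antitoneOn_two_sub_five_mul_div ht (ht.trans hxy) hxy).trans
      (ratio_le_cos_alphaFn_sub hx.1 h hy.2)
  have hπ : |alphaFn x - alphaFn y| ≤ π := by
    rw [alphaFn_eq_arccos hx, alphaFn_eq_arccos hy, abs_le]
    constructor <;> linarith [arccos_nonneg (mobiusRe x), arccos_le_pi (mobiusRe x),
      arccos_nonneg (mobiusRe y), arccos_le_pi (mobiusRe y)]
  calc |alphaFn x - alphaFn y| = arccos (cos |alphaFn x - alphaFn y|) :=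
        (arccos_cos (abs_nonneg _) hπ).symm
    _ = arccos (cos (alphaFn x - alphaFn y)) := by rw [cos_abs]
    _ ≤ arccos ((2 - 5 * s) / (2 + 3 * s)) := arccos_le_arccos hcos

lemma alphaFn_neg_one_sub_alphaFn {s : ℝ} (hs₀ : 0 ≤ s) (hs₂ : s ≤ 2) :
    alphaFn (-1) - alphaFn (-1 + s) = arccos ((2 - 5 * s) / (2 + 3 * s)) := by
  have hend : mobiusRe (-1 + s) = -((2 - 5 * s) / (2 + 3 * s)) := by
    rw [mobiusRe, ← neg_div]
    ring_nf
  rw [alphaFn_eq_arccos (by norm_num), alphaFn_eq_arccos ⟨by linarith, by linarith⟩, hend,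
    arccos_neg, mobiusRe]
  norm_num

lemma arccos_ratio_lt_four_mul_sqrt {s : ℝ} (hs₀ : 0 < s) (hs : s ≤ 1 / 16) :
    arccos ((2 - 5 * s) / (2 + 3 * s)) < 4 * √s := by
  have hz₀ : 0 ≤ 4 * √s := by positivity
  have hz_sq : (4 * √s) ^ 2 = 16 * s := by rw [mul_pow, sq_sqrt hs₀.le]; norm_num
  have hz₁ : 4 * √s ≤ 1 := by nlinarith
  have htaylor := (abs_le.1 (cos_bound (abs_le.2 ⟨by linarith, hz₁⟩))).2
  rw [abs_of_nonneg hz₀, show (4 * √s) ^ 4 = ((4 * √s) ^ 2) ^ 2 by ring, hz_sq] at htaylor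
  have hcos : cos (4 * √s) < (2 - 5 * s) / (2 + 3 * s) := by
    rw [lt_div_iff₀ (by linarith)]
    nlinarith
  calc arccos ((2 - 5 * s) / (2 + 3 * s)) < arccos (cos (4 * √s)) :=
        arccos_lt_arccos (neg_one_le_cos _) hcos (by rw [div_le_one (by linarith)]; linarith)
    _ = 4 * √s := arccos_cos hz₀ (by linarith [pi_gt_three])

theorem stmt_12 :
    ∃ s₀ > (0 : ℝ), ∀ s : ℝ, 0 < s → s < s₀ →
      ∀ x₁ ∈ Set.Icc (-1 : ℝ) 1, ∀ x₂ ∈ Set.Icc (-1 : ℝ) 1, |x₁ - x₂| ≤ s →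
        |alphaFn x₁ - alphaFn x₂| ≤ alphaFn (-1) - alphaFn (-1 + s) ∧
        alphaFn (-1) - alphaFn (-1 + s) < 4 * Real.sqrt s := by
  refine ⟨1 / 16, by norm_num, fun s hs₀ hs x₁ hx₁ x₂ hx₂ hx => ?_⟩
  rw [alphaFn_neg_one_sub_alphaFn hs₀.le (by linarith)]
  exact ⟨abs_alphaFn_sub_le hx₁ hx₂ hx, arccos_ratio_lt_four_mul_sqrt hs₀ hs.le⟩
end

section
/- Let δ > 0, N a positive integer, and suppose complex numbers w_j = r_j e^{iφ_j} (j = 1,2) lie on a circle of center c ∈ ℝ and radius ρ with 1 < c < 2 and 1 < ρ < 2, with |r_j - 1| ≤ δ and 0 < φ_j < π. Then |sin((φ₁+φ₂)/2)·sin((φ₁-φ₂)/2)| < 3δ, and consequently |φ₁ - φ₂| < 4π√δ. -/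
/-! By the law of cosines `2 c cos φ = r + (c² - ρ²) / r`, so for `r` within `δ` of `1` the value
`2 c cos φ` is within `O(δ)` of `1 + c² - ρ²`; hence `|cos φ₁ - cos φ₂| < 6δ`, and
`cos φ₂ - cos φ₁ = 2 sin((φ₁+φ₂)/2) sin((φ₁-φ₂)/2)`. For `φ₁, φ₂ ∈ [0, π]` the first sine factor
dominates the second in absolute value, and Jordan's inequality `|sin x| ≥ 2|x|/π` turns the bound
on the product into `(φ₁ - φ₂)² < 3π²δ`. -/

open Real

lemma norm_ofReal_mul_exp_sub_ofReal_sq (r φ c : ℝ) :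
    ‖(r : ℂ) * Complex.exp (φ * Complex.I) - c‖ ^ 2 = r ^ 2 + c ^ 2 - 2 * c * r * cos φ := by
  rw [Complex.sq_norm, Complex.normSq_apply]
  simp only [Complex.exp_mul_I, Complex.sub_re, Complex.sub_im, Complex.mul_re, Complex.mul_im,
    Complex.add_re, Complex.add_im, Complex.ofReal_re, Complex.ofReal_im, Complex.I_re,
    Complex.I_im, Complex.cos_ofReal_re, Complex.sin_ofReal_re, Complex.cos_ofReal_im,
    Complex.sin_ofReal_im]
  linear_combination r ^ 2 * sin_sq_add_cos_sq φ

/-- `1 + c² - ρ²` is the value of `2 c cos φ` where the circle meets the unit circle. -/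
lemma abs_two_mul_cos_sub_le {c ρ r φ δ : ℝ} (hc : 0 ≤ c) (hr : |r - 1| ≤ δ)
    (hw : ‖(r : ℂ) * Complex.exp (φ * Complex.I) - c‖ = ρ) :
    |2 * c * cos φ - (1 + c ^ 2 - ρ ^ 2)| ≤ δ * (2 + δ + 2 * c) := by
  have hcos : r ^ 2 + c ^ 2 - 2 * c * r * cos φ = ρ ^ 2 := by
    rw [← norm_ofReal_mul_exp_sub_ofReal_sq, hw]
  have hfactor : 2 * c * cos φ - (1 + c ^ 2 - ρ ^ 2) = (r - 1) * (r + 1 - 2 * c * cos φ) := by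
    linear_combination -hcos
  have hr' := abs_le.mp hr
  have hbound : |r + 1 - 2 * c * cos φ| ≤ 2 + δ + 2 * c := by
    rw [abs_le]
    constructor <;> nlinarith [neg_one_le_cos φ, cos_le_one φ]
  rw [hfactor, abs_mul]
  exact mul_le_mul hr hbound (abs_nonneg _) ((abs_nonneg _).trans hr)

lemma abs_cos_sub_cos_lt {c ρ r₁ r₂ φ₁ φ₂ δ : ℝ} (hc : 1 < c) (hδ : 0 < δ)
    (hr₁ : |r₁ - 1| ≤ δ) (hr₂ : |r₂ - 1| ≤ δ)
    (hφ₁ : φ₁ ∈ Set.Ioo 0 π) (hφ₂ : φ₂ ∈ Set.Ioo 0 π)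
    (hw₁ : ‖(r₁ : ℂ) * Complex.exp (φ₁ * Complex.I) - c‖ = ρ)
    (hw₂ : ‖(r₂ : ℂ) * Complex.exp (φ₂ * Complex.I) - c‖ = ρ) :
    |cos φ₁ - cos φ₂| < 6 * δ := by
  rcases lt_or_ge δ (1 / 3) with hδ3 | hδ3
  · have h₁ := abs_le.mp (abs_two_mul_cos_sub_le (by linarith) hr₁ hw₁)
    have h₂ := abs_le.mp (abs_two_mul_cos_sub_le (by linarith) hr₂ hw₂)
    rw [abs_lt]
    constructor <;> nlinarith [mul_pos hδ (sub_pos.mpr hc)]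
  · have hcos (φ : ℝ) (hφ : φ ∈ Set.Ioo 0 π) : |cos φ| < 1 := by
      rw [abs_lt, ← cos_pi, ← cos_zero]
      exact ⟨cos_lt_cos_of_nonneg_of_le_pi hφ.1.le le_rfl hφ.2,
        cos_lt_cos_of_nonneg_of_le_pi le_rfl hφ.2.le hφ.1⟩
    calc |cos φ₁ - cos φ₂| ≤ |cos φ₁| + |cos φ₂| := abs_sub _ _
      _ < 6 * δ := by linarith [hcos φ₁ hφ₁, hcos φ₂ hφ₂]

lemma sin_sq_sub_sin_sq (x y : ℝ) : sin x ^ 2 - sin y ^ 2 = sin (x + y) * sin (x - y) := by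
  rw [sin_add, sin_sub]
  linear_combination sin y ^ 2 * sin_sq_add_cos_sq x - sin x ^ 2 * sin_sq_add_cos_sq y

lemma sin_sq_le_abs_sin_mul_sin {a b : ℝ} (hab : 0 ≤ sin a * sin b) :
    sin ((a - b) / 2) ^ 2 ≤ |sin ((a + b) / 2) * sin ((a - b) / 2)| := by
  have hsq := sin_sq_sub_sin_sq ((a + b) / 2) ((a - b) / 2)
  rw [show (a + b) / 2 + (a - b) / 2 = a by ring, show (a + b) / 2 - (a - b) / 2 = b by ring] at hsq
  have hle : |sin ((a - b) / 2)| ≤ |sin ((a + b) / 2)| := sq_le_sq.mp (by linarith)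
  rw [← sq_abs, sq, abs_mul]
  exact mul_le_mul_of_nonneg_right hle (abs_nonneg _)

lemma sq_sub_le_pi_sq_mul_abs_sin_mul_sin {a b : ℝ} (ha : a ∈ Set.Icc 0 π) (hb : b ∈ Set.Icc 0 π) :
    (a - b) ^ 2 ≤ π ^ 2 * |sin ((a + b) / 2) * sin ((a - b) / 2)| := by
  have hjordan : 2 / π * |(a - b) / 2| ≤ |sin ((a - b) / 2)| :=
    mul_abs_le_abs_sin (by rw [abs_le]; constructor <;> linarith [ha.1, ha.2, hb.1, hb.2])
  have hsin := sin_sq_le_abs_sin_mul_sin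
    (mul_nonneg (sin_nonneg_of_mem_Icc ha) (sin_nonneg_of_mem_Icc hb))
  calc (a - b) ^ 2 = π ^ 2 * (2 / π * |(a - b) / 2|) ^ 2 := by
        rw [mul_pow, sq_abs]; field_simp
    _ ≤ π ^ 2 * |sin ((a - b) / 2)| ^ 2 := by gcongr
    _ ≤ _ := by rw [sq_abs]; gcongr

theorem stmt_17_general (δ : ℝ) (hδ : 0 < δ)
    (c ρ r₁ r₂ φ₁ φ₂ : ℝ) (hc1 : 1 < c)
    (hr₁ : |r₁ - 1| ≤ δ) (hr₂ : |r₂ - 1| ≤ δ)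
    (hφ₁ : 0 < φ₁) (hφ₁' : φ₁ < Real.pi) (hφ₂ : 0 < φ₂) (hφ₂' : φ₂ < Real.pi)
    (hw₁ : ‖(r₁ : ℂ) * Complex.exp (φ₁ * Complex.I) - c‖ = ρ)
    (hw₂ : ‖(r₂ : ℂ) * Complex.exp (φ₂ * Complex.I) - c‖ = ρ) :
    |Real.sin ((φ₁ + φ₂) / 2) * Real.sin ((φ₁ - φ₂) / 2)| < 3 * δ ∧
    |φ₁ - φ₂| < 4 * Real.pi * Real.sqrt δ := by
  have hprod : |sin ((φ₁ + φ₂) / 2) * sin ((φ₁ - φ₂) / 2)| < 3 * δ := by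
    have hcos := abs_cos_sub_cos_lt hc1 hδ hr₁ hr₂ ⟨hφ₁, hφ₁'⟩ ⟨hφ₂, hφ₂'⟩ hw₁ hw₂
    rw [cos_sub_cos, mul_assoc, abs_mul, abs_neg, abs_two] at hcos
    linarith
  refine ⟨hprod, abs_lt_of_sq_lt_sq ?_ (by positivity)⟩
  calc (φ₁ - φ₂) ^ 2
      ≤ π ^ 2 * |sin ((φ₁ + φ₂) / 2) * sin ((φ₁ - φ₂) / 2)| :=
        sq_sub_le_pi_sq_mul_abs_sin_mul_sin ⟨hφ₁.le, hφ₁'.le⟩ ⟨hφ₂.le, hφ₂'.le⟩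
    _ < π ^ 2 * (3 * δ) := by gcongr
    _ ≤ (4 * π * √δ) ^ 2 := by
        rw [mul_pow, sq_sqrt hδ.le]
        nlinarith [sq_nonneg π]

theorem stmt_17 (δ : ℝ) (hδ : 0 < δ) (N : ℕ) (hN : 0 < N)
    (c ρ r₁ r₂ φ₁ φ₂ : ℝ) (hc1 : 1 < c) (hc2 : c < 2) (hρ1 : 1 < ρ) (hρ2 : ρ < 2)
    (hr₁ : |r₁ - 1| ≤ δ) (hr₂ : |r₂ - 1| ≤ δ)
    (hφ₁ : 0 < φ₁) (hφ₁' : φ₁ < Real.pi) (hφ₂ : 0 < φ₂) (hφ₂' : φ₂ < Real.pi)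
    (hw₁ : ‖(r₁ : ℂ) * Complex.exp (φ₁ * Complex.I) - c‖ = ρ)
    (hw₂ : ‖(r₂ : ℂ) * Complex.exp (φ₂ * Complex.I) - c‖ = ρ) :
    |Real.sin ((φ₁ + φ₂) / 2) * Real.sin ((φ₁ - φ₂) / 2)| < 3 * δ ∧
    |φ₁ - φ₂| < 4 * Real.pi * Real.sqrt δ :=
  stmt_17_general δ hδ c ρ r₁ r₂ φ₁ φ₂ hc1 hr₁ hr₂ hφ₁ hφ₁' hφ₂ hφ₂' hw₁ hw₂
end
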